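/- Substitution commutes with the typing-derivation-directed CPS transformation: if D_c is a derivation of Γ, x:τ ⊢_ATM c : ρ and D_v is a derivation of Γ ⊢_ATM v : τ, then ⟦D_c[D_v/x]⟧ = ⟦D_c⟧[⟦D_v⟧/x], where D_c[D_v/x] is the derivation obtained by replacing every leaf instance of the variable rule for x by D_v. -/

import Mathlib

namespace LEH

/-! ## Syntax of λEH (finitary PCF with effect handlers), extended with records,
    in de Bruijn representation.  A handler is represented by its return clause
    (one binder) and, for each operation name `o : ℕ`, an operation clause
    (two binders: the parameter `x` at index 1 and the continuation `k` at index 0). -/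

mutual
inductive Val : Type
| var (n : ℕ)
| unit
| tt
| ff
| lam (c : Comp)
| fix (v : Val)              -- rec x = v
| record (f : ℕ → Val)
inductive Comp : Type
| ret (v : Val)
| op (o : ℕ) (v : Val)
| app (v₁ v₂ : Val)
| ite (v : Val) (c₁ c₂ : Comp)
| letin (c₁ c₂ : Comp)
| handle (hret : Comp) (hops : ℕ → Comp) (c : Comp)
| proj (v : Val) (l : ℕ)
end

def liftR (ξ : ℕ → ℕ) : ℕ → ℕ
| 0 => 0
| n+1 => ξ n + 1

mutual
def renameV (ξ : ℕ → ℕ) : Val → Val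
| .var n => .var (ξ n)
| .unit => .unit
| .tt => .tt
| .ff => .ff
| .lam c => .lam (renameC (liftR ξ) c)
| .fix v => .fix (renameV (liftR ξ) v)
| .record f => .record (fun o => renameV ξ (f o))
def renameC (ξ : ℕ → ℕ) : Comp → Comp
| .ret v => .ret (renameV ξ v)
| .op o v => .op o (renameV ξ v)
| .app v₁ v₂ => .app (renameV ξ v₁) (renameV ξ v₂)
| .ite v c₁ c₂ => .ite (renameV ξ v) (renameC ξ c₁) (renameC ξ c₂)
| .letin c₁ c₂ => .letin (renameC ξ c₁) (renameC (liftR ξ) c₂)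
| .handle r ops c =>
    .handle (renameC (liftR ξ) r) (fun o => renameC (liftR (liftR ξ)) (ops o)) (renameC ξ c)
| .proj v l => .proj (renameV ξ v) l
end

def liftS (σ : ℕ → Val) : ℕ → Val
| 0 => .var 0
| n+1 => renameV Nat.succ (σ n)

mutual
def substV (σ : ℕ → Val) : Val → Val
| .var n => σ n
| .unit => .unit
| .tt => .tt
| .ff => .ff
| .lam c => .lam (substC (liftS σ) c)
| .fix v => .fix (substV (liftS σ) v)
| .record f => .record (fun o => substV σ (f o))
def substC (σ : ℕ → Val) : Comp → Comp
| .ret v => .ret (substV σ v)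
| .op o v => .op o (substV σ v)
| .app v₁ v₂ => .app (substV σ v₁) (substV σ v₂)
| .ite v c₁ c₂ => .ite (substV σ v) (substC σ c₁) (substC σ c₂)
| .letin c₁ c₂ => .letin (substC σ c₁) (substC (liftS σ) c₂)
| .handle r ops c =>
    .handle (substC (liftS σ) r) (fun o => substC (liftS (liftS σ)) (ops o)) (substC σ c)
| .proj v l => .proj (substV σ v) l
end

/-- substitution of a single value for de Bruijn index 0 -/
def sub1 (v : Val) : ℕ → Val
| 0 => v
| n+1 => .var n

/-- substitution of two values: index 1 ↦ `x` (operation parameter),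
    index 0 ↦ `k` (captured continuation) -/
def sub2 (x k : Val) : ℕ → Val
| 0 => k
| 1 => x
| n+2 => .var n

def subst1C (c : Comp) (v : Val) : Comp := substC (sub1 v) c
def subst1V (w : Val) (v : Val) : Val := substV (sub1 v) w

/-! ## Evaluation contexts and small-step operational semantics -/

inductive EC : Type
| hole
| letE (E : EC) (c : Comp)

def plug : EC → Comp → Comp
| .hole, c => c
| .letE E c₂, c => .letin (plug E c) c₂

def renameE (ξ : ℕ → ℕ) : EC → EC
| .hole => .hole
| .letE E c => .letE (renameE ξ E) (renameC (liftR ξ) c)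

/-- the captured delimited continuation `λ y. with h handle E[return y]` -/
def contOf (r : Comp) (ops : ℕ → Comp) (E : EC) : Val :=
  .lam (.handle (renameC (liftR Nat.succ) r)
    (fun o => renameC (liftR (liftR Nat.succ)) (ops o))
    (plug (renameE Nat.succ E) (.ret (.var 0))))

inductive Step : Comp → Comp → Prop
| letc {c₁ c₂ c} : Step c₁ c₂ → Step (.letin c₁ c) (.letin c₂ c)
| letret {v c} : Step (.letin (.ret v) c) (subst1C c v)
| lamapp {c v} : Step (.app (.lam c) v) (subst1C c v)
| fixapp {v v'} : Step (.app (.fix v) v') (.app (subst1V v (.fix v)) v')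
| iftrue {c₁ c₂} : Step (.ite .tt c₁ c₂) c₁
| iffalse {c₁ c₂} : Step (.ite .ff c₁ c₂) c₂
| han {r ops c c'} : Step c c' → Step (.handle r ops c) (.handle r ops c')
| hret {r ops v} : Step (.handle r ops (.ret v)) (subst1C r v)
| hop {r ops E o v} :
    Step (.handle r ops (plug E (.op o v)))
      (substC (sub2 v (contOf r ops E)) (ops o))
| projr {f l} : Step (.proj (.record f) l) (.ret (f l))

abbrev StepStar : Comp → Comp → Prop := Relation.ReflTransGen Step
abbrev StepPlus : Comp → Comp → Prop := Relation.TransGen Step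

/-! ## ATM types and subtyping -/

mutual
inductive VTy : Type
| unit
| bool
| arrow (τ : VTy) (ρ : CTy)
inductive CTy : Type
| pure (τ : VTy)
| eff (τ : VTy) (ρ₁ ρ₂ : CTy)
end

mutual
inductive SubV : VTy → VTy → Prop
| unit : SubV .unit .unit
| bool : SubV .bool .bool
| arrow {τ₁ τ₂ ρ₁ ρ₂} : SubV τ₂ τ₁ → SubC ρ₁ ρ₂ → SubV (.arrow τ₁ ρ₁) (.arrow τ₂ ρ₂)
inductive SubC : CTy → CTy → Prop
| pure {τ₁ τ₂} : SubV τ₁ τ₂ → SubC (.pure τ₁) (.pure τ₂)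
| ipure {τ₁ τ₂ ρ₁ ρ₂ ρ₁' ρ₂'} :
    SubV τ₁ τ₂ → SubC ρ₂ ρ₁ → SubC ρ₁' ρ₂' → SubC (.eff τ₁ ρ₁ ρ₁') (.eff τ₂ ρ₂ ρ₂')
| embed {τ₁ τ₂ ρ₁ ρ₂} : SubV τ₁ τ₂ → SubC ρ₁ ρ₂ → SubC (.pure τ₁) (.eff τ₂ ρ₁ ρ₂)
end

/-- An operation signature Σ: each operation `o` has type
    `arg o → res o / ans1 o ⇒ ans2 o`. -/
structure Sig where
  arg : ℕ → VTy
  res : ℕ → VTy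
  ans1 : ℕ → CTy
  ans2 : ℕ → CTy

/-! ## The ATM type system ⊢_ATM -/

mutual
inductive TV : Sig → List VTy → Val → VTy → Prop
| unit {S Γ} : TV S Γ .unit .unit
| tt {S Γ} : TV S Γ .tt .bool
| ff {S Γ} : TV S Γ .ff .bool
| var {S Γ n τ} : Γ[n]? = some τ → TV S Γ (.var n) τ
| lam {S Γ τ c ρ} : TC S (τ :: Γ) c ρ → TV S Γ (.lam c) (.arrow τ ρ)
| fix {S Γ τ v} : TV S (τ :: Γ) v τ → TV S Γ (.fix v) τ
| vsub {S Γ v τ τ'} : TV S Γ v τ → SubV τ τ' → TV S Γ v τ'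
inductive TC : Sig → List VTy → Comp → CTy → Prop
| ret {S Γ v τ} : TV S Γ v τ → TC S Γ (.ret v) (.pure τ)
| app {S Γ v₁ v₂ τ ρ} : TV S Γ v₁ (.arrow τ ρ) → TV S Γ v₂ τ → TC S Γ (.app v₁ v₂) ρ
| ite {S Γ v c₁ c₂ ρ} :
    TV S Γ v .bool → TC S Γ c₁ ρ → TC S Γ c₂ ρ → TC S Γ (.ite v c₁ c₂) ρ
| letP {S Γ c₁ c₂ τ₁ τ₂} :
    TC S Γ c₁ (.pure τ₁) → TC S (τ₁ :: Γ) c₂ (.pure τ₂) →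
    TC S Γ (.letin c₁ c₂) (.pure τ₂)
| letIp {S Γ c₁ c₂ τ₁ τ₂ ρ₁ ρ₁' ρ₂} :
    TC S Γ c₁ (.eff τ₁ ρ₁ ρ₁') → TC S (τ₁ :: Γ) c₂ (.eff τ₂ ρ₂ ρ₁) →
    TC S Γ (.letin c₁ c₂) (.eff τ₂ ρ₂ ρ₁')
| op {S Γ o v} : TV S Γ v (S.arg o) → TC S Γ (.op o v) (.eff (S.res o) (S.ans1 o) (S.ans2 o))
| handle {S Γ r ops c τ ρ ρ'} :
    (∀ o, TC S (.arrow (S.res o) (S.ans1 o) :: S.arg o :: Γ) (ops o) (S.ans2 o)) →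
    TC S (τ :: Γ) r ρ →
    TC S Γ c (.eff τ ρ ρ') →
    TC S Γ (.handle r ops c) ρ'
| csub {S Γ c ρ ρ'} : TC S Γ c ρ → SubC ρ ρ' → TC S Γ c ρ'
end

/-! ## Simple types and the simple type system ⊢_ST (on λEH with records).
    `STy.sig` is the record type `⟦Σ⟧`; the system is parametrized by an
    interpretation `I : ℕ → STy` of its fields and by an operation
    signature `SS`. -/

inductive STy : Type
| unit
| bool
| arrow (σ₁ σ₂ : STy)
| sig

structure SigS where
  arg : ℕ → STy
  res : ℕ → STy

mutual
inductive SV : (ℕ → STy) → SigS → List STy → Val → STy → Prop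
| unit {I SS Γ} : SV I SS Γ .unit .unit
| tt {I SS Γ} : SV I SS Γ .tt .bool
| ff {I SS Γ} : SV I SS Γ .ff .bool
| var {I SS Γ n σ} : Γ[n]? = some σ → SV I SS Γ (.var n) σ
| lam {I SS Γ σ c σ'} : SC I SS (σ :: Γ) c σ' → SV I SS Γ (.lam c) (.arrow σ σ')
| fix {I SS Γ σ v} : SV I SS (σ :: Γ) v σ → SV I SS Γ (.fix v) σ
| record {I SS Γ f} : (∀ o, SV I SS Γ (f o) (I o)) → SV I SS Γ (.record f) .sig
inductive SC : (ℕ → STy) → SigS → List STy → Comp → STy → Prop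
| ret {I SS Γ v σ} : SV I SS Γ v σ → SC I SS Γ (.ret v) σ
| app {I SS Γ v₁ v₂ σ σ'} :
    SV I SS Γ v₁ (.arrow σ σ') → SV I SS Γ v₂ σ → SC I SS Γ (.app v₁ v₂) σ'
| ite {I SS Γ v c₁ c₂ σ} :
    SV I SS Γ v .bool → SC I SS Γ c₁ σ → SC I SS Γ c₂ σ → SC I SS Γ (.ite v c₁ c₂) σ
| letin {I SS Γ c₁ c₂ σ σ'} :
    SC I SS Γ c₁ σ → SC I SS (σ :: Γ) c₂ σ' → SC I SS Γ (.letin c₁ c₂) σ'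
| op {I SS Γ o v} : SV I SS Γ v (SS.arg o) → SC I SS Γ (.op o v) (SS.res o)
| handle {I SS Γ r ops c σ σ'} :
    SC I SS (σ :: Γ) r σ' →
    (∀ o, SC I SS (.arrow (SS.res o) σ' :: SS.arg o :: Γ) (ops o) σ') →
    SC I SS Γ c σ →
    SC I SS Γ (.handle r ops c) σ'
| proj {I SS Γ v l} : SV I SS Γ v .sig → SC I SS Γ (.proj v l) (I l)
end

/-! ## Derivation trees (Type-valued) for subtyping and ATM typing,
    used by the typing-derivation-directed CPS transformation -/

mutual
inductive SubVD : VTy → VTy → Type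
| unit : SubVD .unit .unit
| bool : SubVD .bool .bool
| arrow {τ₁ τ₂ ρ₁ ρ₂} : SubVD τ₂ τ₁ → SubCD ρ₁ ρ₂ → SubVD (.arrow τ₁ ρ₁) (.arrow τ₂ ρ₂)
inductive SubCD : CTy → CTy → Type
| pure {τ₁ τ₂} : SubVD τ₁ τ₂ → SubCD (.pure τ₁) (.pure τ₂)
| ipure {τ₁ τ₂ ρ₁ ρ₂ ρ₁' ρ₂'} :
    SubVD τ₁ τ₂ → SubCD ρ₂ ρ₁ → SubCD ρ₁' ρ₂' → SubCD (.eff τ₁ ρ₁ ρ₁') (.eff τ₂ ρ₂ ρ₂')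
| embed {τ₁ τ₂ ρ₁ ρ₂} : SubVD τ₁ τ₂ → SubCD ρ₁ ρ₂ → SubCD (.pure τ₁) (.eff τ₂ ρ₁ ρ₂)
end

mutual
inductive TVD : Sig → List VTy → Val → VTy → Type
| unit {S Γ} : TVD S Γ .unit .unit
| tt {S Γ} : TVD S Γ .tt .bool
| ff {S Γ} : TVD S Γ .ff .bool
| var {S Γ τ} (n : ℕ) : Γ[n]? = some τ → TVD S Γ (.var n) τ
| lam {S Γ τ c ρ} : TCD S (τ :: Γ) c ρ → TVD S Γ (.lam c) (.arrow τ ρ)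
| fix {S Γ τ v} : TVD S (τ :: Γ) v τ → TVD S Γ (.fix v) τ
| vsub {S Γ v τ τ'} : TVD S Γ v τ → SubVD τ τ' → TVD S Γ v τ'
inductive TCD : Sig → List VTy → Comp → CTy → Type
| ret {S Γ v τ} : TVD S Γ v τ → TCD S Γ (.ret v) (.pure τ)
| app {S Γ v₁ v₂ τ ρ} : TVD S Γ v₁ (.arrow τ ρ) → TVD S Γ v₂ τ → TCD S Γ (.app v₁ v₂) ρ
| ite {S Γ v c₁ c₂ ρ} :
    TVD S Γ v .bool → TCD S Γ c₁ ρ → TCD S Γ c₂ ρ → TCD S Γ (.ite v c₁ c₂) ρ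
| letP {S Γ c₁ c₂ τ₁ τ₂} :
    TCD S Γ c₁ (.pure τ₁) → TCD S (τ₁ :: Γ) c₂ (.pure τ₂) →
    TCD S Γ (.letin c₁ c₂) (.pure τ₂)
| letIp {S Γ c₁ c₂ τ₁ τ₂ ρ₁ ρ₁' ρ₂} :
    TCD S Γ c₁ (.eff τ₁ ρ₁ ρ₁') → TCD S (τ₁ :: Γ) c₂ (.eff τ₂ ρ₂ ρ₁) →
    TCD S Γ (.letin c₁ c₂) (.eff τ₂ ρ₂ ρ₁')
| op {S Γ} (o : ℕ) {v} :
    TVD S Γ v (S.arg o) → TCD S Γ (.op o v) (.eff (S.res o) (S.ans1 o) (S.ans2 o))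
| handle {S Γ r ops c τ ρ ρ'} :
    (∀ o, TCD S (.arrow (S.res o) (S.ans1 o) :: S.arg o :: Γ) (ops o) (S.ans2 o)) →
    TCD S (τ :: Γ) r ρ →
    TCD S Γ c (.eff τ ρ ρ') →
    TCD S Γ (.handle r ops c) ρ'
| csub {S Γ c ρ ρ'} : TCD S Γ c ρ → SubCD ρ ρ' → TCD S Γ c ρ'
end

/-! ## The CPS transformation -/

/-! CPS transformation of ATM value and computation types into simple types;
    `⟦τ/ρ₁⇒ρ₂⟧ = ⟦Σ⟧ → (⟦τ⟧ → ⟦ρ₁⟧) → ⟦ρ₂⟧`, where `⟦Σ⟧` is `STy.sig`. -/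
mutual
def cpsT : VTy → STy
| .unit => .unit
| .bool => .bool
| .arrow τ ρ => .arrow (cpsT τ) (cpsCT ρ)
def cpsCT : CTy → STy
| .pure τ => cpsT τ
| .eff τ ρ₁ ρ₂ => .arrow .sig (.arrow (.arrow (cpsT τ) (cpsCT ρ₁)) (cpsCT ρ₂))
end

/-- the field types of the record type `⟦Σ⟧` -/
def opSTy (S : Sig) : ℕ → STy := fun o =>
  .arrow (cpsT (S.arg o)) (.arrow (.arrow (cpsT (S.res o)) (cpsCT (S.ans1 o))) (cpsCT (S.ans2 o)))

/-- application of a computation to a computation (left-to-right sequencing sugar) -/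
def apc (c₁ c₂ : Comp) : Comp :=
  .letin c₁ (.letin (renameC Nat.succ c₂) (.app (.var 1) (.var 0)))

/-! CPS transformation of subtyping derivations, given as the coercion
    they induce on (already-transformed) terms; the static applications `@`
    of the paper are performed on the fly. -/
mutual
def coerceV : {τ τ' : VTy} → SubVD τ τ' → Val → Val
| _, _, .unit, v => v
| _, _, .bool, v => v
| _, _, .arrow d21 d12, f =>
    .lam (coerceC d12 (.app (renameV Nat.succ f) (coerceV d21 (.var 0))))
def coerceC : {ρ ρ' : CTy} → SubCD ρ ρ' → Comp → Comp
| _, _, .pure d, c => .letin c (.ret (coerceV d (.var 0)))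
| _, _, .ipure dT d21 d12, c =>
    .ret (.lam (.ret (.lam (coerceC d12
      (apc (apc (renameC (fun n => n + 2) c) (.ret (.var 1)))
        (.ret (.lam (coerceC d21 (apc (.ret (.var 1)) (.ret (coerceV dT (.var 0))))))))))))
| _, _, .embed dT dR, c =>
    .ret (.lam (.ret (.lam (coerceC dR
      (.letin (renameC (fun n => n + 2) c)
        (apc (.ret (.var 1)) (.ret (coerceV dT (.var 0)))))))))
end

/-! the typing-derivation-directed CPS transformation -/
mutual
def cpsV {S : Sig} : {Γ : List VTy} → {v : Val} → {τ : VTy} → TVD S Γ v τ → Val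
| _, _, _, .unit => .unit
| _, _, _, .tt => .tt
| _, _, _, .ff => .ff
| _, _, _, .var n _ => .var n
| _, _, _, .lam D => .lam (cpsC D)
| _, _, _, .fix D => .fix (cpsV D)
| _, _, _, .vsub D d => coerceV d (cpsV D)
def cpsC {S : Sig} : {Γ : List VTy} → {c : Comp} → {ρ : CTy} → TCD S Γ c ρ → Comp
| _, _, _, .ret D => .ret (cpsV D)
| _, _, _, .app D₁ D₂ => .app (cpsV D₁) (cpsV D₂)
| _, _, _, .ite Dv D₁ D₂ => .ite (cpsV Dv) (cpsC D₁) (cpsC D₂)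
| _, _, _, .letP D₁ D₂ => .letin (cpsC D₁) (cpsC D₂)
| _, _, _, .letIp D₁ D₂ =>
    .ret (.lam (.ret (.lam (apc (apc (renameC (fun n => n + 2) (cpsC D₁)) (.ret (.var 1)))
      (.ret (.lam (apc (apc (renameC (liftR (fun n => n + 2)) (cpsC D₂)) (.ret (.var 2)))
        (.ret (.var 1)))))))))
| _, _, _, .op o Dv =>
    .ret (.lam (.ret (.lam (apc (apc (.proj (.var 1) o)
      (.ret (renameV (fun n => n + 2) (cpsV Dv)))) (.ret (.var 0))))))
| _, _, _, .handle Dops Dret Dc =>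
    apc (apc (cpsC Dc) (.ret (.record (fun o => .lam (.ret (.lam (cpsC (Dops o))))))))
      (.ret (.lam (cpsC Dret)))
| _, _, _, .csub D d => coerceC d (cpsC D)
end

/-- `⟦D⟧ v_h v_k`: applying a CPS-transformed effectful computation to a
    (translated) handler record and continuation -/
def capp2 (c : Comp) (vh vk : Val) : Comp := apc (apc c (.ret vh)) (.ret vk)

/-! ## Effect-handler-freeness and rec-freeness -/

mutual
def hfV : Val → Prop
| .var _ => True
| .unit => True
| .tt => True
| .ff => True
| .lam c => hfC c
| .fix v => hfV v
| .record f => ∀ o, hfV (f o)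
def hfC : Comp → Prop
| .ret v => hfV v
| .op _ _ => False
| .app v₁ v₂ => hfV v₁ ∧ hfV v₂
| .ite v c₁ c₂ => hfV v ∧ hfC c₁ ∧ hfC c₂
| .letin c₁ c₂ => hfC c₁ ∧ hfC c₂
| .handle _ _ _ => False
| .proj v _ => hfV v
end

mutual
def recFreeV : Val → Prop
| .var _ => True
| .unit => True
| .tt => True
| .ff => True
| .lam c => recFreeC c
| .fix _ => False
| .record f => ∀ o, recFreeV (f o)
def recFreeC : Comp → Prop
| .ret v => recFreeV v
| .op _ v => recFreeV v
| .app v₁ v₂ => recFreeV v₁ ∧ recFreeV v₂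
| .ite v c₁ c₂ => recFreeV v ∧ recFreeC c₁ ∧ recFreeC c₂
| .letin c₁ c₂ => recFreeC c₁ ∧ recFreeC c₂
| .handle r ops c => recFreeC r ∧ (∀ o, recFreeC (ops o)) ∧ recFreeC c
| .proj v _ => recFreeV v
end

end LEH

namespace LEH

/-! ## Intrinsically-typed ATM typing derivations, derivation substitution,
    and the CPS transformation on derivations -/

mutual
inductive IV : Sig → List VTy → VTy → Type
| var {S Γ τ} (n : ℕ) (hn : Γ[n]? = some τ) : IV S Γ τ
| unit {S Γ} : IV S Γ .unit
| tt {S Γ} : IV S Γ .bool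
| ff {S Γ} : IV S Γ .bool
| lam {S Γ τ ρ} : IC S (τ :: Γ) ρ → IV S Γ (.arrow τ ρ)
| fix {S Γ τ} : IV S (τ :: Γ) τ → IV S Γ τ
| vsub {S Γ τ τ'} : IV S Γ τ → SubVD τ τ' → IV S Γ τ'
inductive IC : Sig → List VTy → CTy → Type
| ret {S Γ τ} : IV S Γ τ → IC S Γ (.pure τ)
| app {S Γ τ ρ} : IV S Γ (.arrow τ ρ) → IV S Γ τ → IC S Γ ρ
| ite {S Γ ρ} : IV S Γ .bool → IC S Γ ρ → IC S Γ ρ → IC S Γ ρ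
| letP {S Γ τ₁ τ₂} : IC S Γ (.pure τ₁) → IC S (τ₁ :: Γ) (.pure τ₂) → IC S Γ (.pure τ₂)
| letIp {S Γ τ₁ τ₂ ρ₁ ρ₁' ρ₂} :
    IC S Γ (.eff τ₁ ρ₁ ρ₁') → IC S (τ₁ :: Γ) (.eff τ₂ ρ₂ ρ₁) → IC S Γ (.eff τ₂ ρ₂ ρ₁')
| op {S Γ} (o : ℕ) : IV S Γ (S.arg o) → IC S Γ (.eff (S.res o) (S.ans1 o) (S.ans2 o))
| handle {S Γ τ ρ ρ'} :
    (∀ o, IC S (.arrow (S.res o) (S.ans1 o) :: S.arg o :: Γ) (S.ans2 o)) →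
    IC S (τ :: Γ) ρ → IC S Γ (.eff τ ρ ρ') → IC S Γ ρ'
| csub {S Γ ρ ρ'} : IC S Γ ρ → SubCD ρ ρ' → IC S Γ ρ'
end

def Extr (ξ : ℕ → ℕ) (Γ Γ' : List VTy) : Prop :=
  ∀ n τ, Γ[n]? = some τ → Γ'[ξ n]? = some τ

theorem Extr.lift {ξ : ℕ → ℕ} {Γ Γ' : List VTy} (h : Extr ξ Γ Γ') (τ : VTy) :
    Extr (liftR ξ) (τ :: Γ) (τ :: Γ') := by
  intro n τ' hn
  cases n with
  | zero => simpa [liftR] using hn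
  | succ n => simpa [liftR] using h n τ' (by simpa using hn)

mutual
def renIV {S : Sig} : {Γ : List VTy} → {τ : VTy} → {Γ' : List VTy} → (ξ : ℕ → ℕ) →
    Extr ξ Γ Γ' → IV S Γ τ → IV S Γ' τ
| _, _, _, ξ, h, .var n hn => .var (ξ n) (h n _ hn)
| _, _, _, _, _, .unit => .unit
| _, _, _, _, _, .tt => .tt
| _, _, _, _, _, .ff => .ff
| _, _, _, ξ, h, .lam D => .lam (renIC (liftR ξ) (h.lift _) D)
| _, _, _, ξ, h, .fix D => .fix (renIV (liftR ξ) (h.lift _) D)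
| _, _, _, ξ, h, .vsub D d => .vsub (renIV ξ h D) d
def renIC {S : Sig} : {Γ : List VTy} → {ρ : CTy} → {Γ' : List VTy} → (ξ : ℕ → ℕ) →
    Extr ξ Γ Γ' → IC S Γ ρ → IC S Γ' ρ
| _, _, _, ξ, h, .ret D => .ret (renIV ξ h D)
| _, _, _, ξ, h, .app D₁ D₂ => .app (renIV ξ h D₁) (renIV ξ h D₂)
| _, _, _, ξ, h, .ite Dv D₁ D₂ => .ite (renIV ξ h Dv) (renIC ξ h D₁) (renIC ξ h D₂)
| _, _, _, ξ, h, .letP D₁ D₂ => .letP (renIC ξ h D₁) (renIC (liftR ξ) (h.lift _) D₂)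
| _, _, _, ξ, h, .letIp D₁ D₂ => .letIp (renIC ξ h D₁) (renIC (liftR ξ) (h.lift _) D₂)
| _, _, _, ξ, h, .op o D => .op o (renIV ξ h D)
| _, _, _, ξ, h, .handle Dops Dret Dc =>
    .handle (fun o => renIC (liftR (liftR ξ)) ((h.lift _).lift _) (Dops o))
      (renIC (liftR ξ) (h.lift _) Dret) (renIC ξ h Dc)
| _, _, _, ξ, h, .csub D d => .csub (renIC ξ h D) d
end

/-- a (typed) substitution of derivations for the variables of `Γ` -/
def ISub (S : Sig) (Γ Γ' : List VTy) : Type :=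
  ∀ (n : ℕ) τ, Γ[n]? = some τ → IV S Γ' τ

def ISub.lift {S : Sig} {Γ Γ' : List VTy} (σ : ISub S Γ Γ') (τ : VTy) :
    ISub S (τ :: Γ) (τ :: Γ') :=
  fun n =>
    match n with
    | 0 => fun _ hn => IV.var 0 (by simpa using hn)
    | n+1 => fun τ' hn =>
        renIV Nat.succ (fun _ _ hm => by simpa using hm) (σ n τ' (by simpa using hn))

mutual
def substIV {S : Sig} : {Γ : List VTy} → {τ : VTy} → {Γ' : List VTy} →
    ISub S Γ Γ' → IV S Γ τ → IV S Γ' τ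
| _, _, _, σ, .var n hn => σ n _ hn
| _, _, _, _, .unit => .unit
| _, _, _, _, .tt => .tt
| _, _, _, _, .ff => .ff
| _, _, _, σ, .lam D => .lam (substIC (σ.lift _) D)
| _, _, _, σ, .fix D => .fix (substIV (σ.lift _) D)
| _, _, _, σ, .vsub D d => .vsub (substIV σ D) d
def substIC {S : Sig} : {Γ : List VTy} → {ρ : CTy} → {Γ' : List VTy} →
    ISub S Γ Γ' → IC S Γ ρ → IC S Γ' ρ
| _, _, _, σ, .ret D => .ret (substIV σ D)
| _, _, _, σ, .app D₁ D₂ => .app (substIV σ D₁) (substIV σ D₂)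
| _, _, _, σ, .ite Dv D₁ D₂ => .ite (substIV σ Dv) (substIC σ D₁) (substIC σ D₂)
| _, _, _, σ, .letP D₁ D₂ => .letP (substIC σ D₁) (substIC (σ.lift _) D₂)
| _, _, _, σ, .letIp D₁ D₂ => .letIp (substIC σ D₁) (substIC (σ.lift _) D₂)
| _, _, _, σ, .op o D => .op o (substIV σ D)
| _, _, _, σ, .handle Dops Dret Dc =>
    .handle (fun o => substIC ((σ.lift _).lift _) (Dops o))
      (substIC (σ.lift _) Dret) (substIC σ Dc)
| _, _, _, σ, .csub D d => .csub (substIC σ D) d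
end

/-- the single substitution `[D_v/x]`: the leaf variable at index 0 is replaced
    by `D_v`, all other variables are left alone -/
def sub1I {S : Sig} {Γ : List VTy} {τ : VTy} (Dv : IV S Γ τ) : ISub S (τ :: Γ) Γ :=
  fun n =>
    match n with
    | 0 => fun τ' hn => (show τ = τ' by simpa using hn) ▸ Dv
    | n+1 => fun _ hn => IV.var n (by simpa using hn)

def substI1 {S : Sig} {Γ : List VTy} {τ : VTy} {ρ : CTy}
    (Dc : IC S (τ :: Γ) ρ) (Dv : IV S Γ τ) : IC S Γ ρ :=
  substIC (sub1I Dv) Dc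

/-! the CPS transformation on (intrinsically-typed) derivations -/
mutual
def cpsIV {S : Sig} : {Γ : List VTy} → {τ : VTy} → IV S Γ τ → Val
| _, _, .var n _ => .var n
| _, _, .unit => .unit
| _, _, .tt => .tt
| _, _, .ff => .ff
| _, _, .lam D => .lam (cpsIC D)
| _, _, .fix D => .fix (cpsIV D)
| _, _, .vsub D d => coerceV d (cpsIV D)
def cpsIC {S : Sig} : {Γ : List VTy} → {ρ : CTy} → IC S Γ ρ → Comp
| _, _, .ret D => .ret (cpsIV D)
| _, _, .app D₁ D₂ => .app (cpsIV D₁) (cpsIV D₂)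
| _, _, .ite Dv D₁ D₂ => .ite (cpsIV Dv) (cpsIC D₁) (cpsIC D₂)
| _, _, .letP D₁ D₂ => .letin (cpsIC D₁) (cpsIC D₂)
| _, _, .letIp D₁ D₂ =>
    .ret (.lam (.ret (.lam (apc (apc (renameC (fun n => n + 2) (cpsIC D₁)) (.ret (.var 1)))
      (.ret (.lam (apc (apc (renameC (liftR (fun n => n + 2)) (cpsIC D₂)) (.ret (.var 2)))
        (.ret (.var 1)))))))))
| _, _, .op o Dv =>
    .ret (.lam (.ret (.lam (apc (apc (.proj (.var 1) o)
      (.ret (renameV (fun n => n + 2) (cpsIV Dv)))) (.ret (.var 0))))))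
| _, _, .handle Dops Dret Dc =>
    apc (apc (cpsIC Dc) (.ret (.record (fun o => .lam (.ret (.lam (cpsIC (Dops o))))))))
      (.ret (.lam (cpsIC Dret)))
| _, _, .csub D d => coerceC d (cpsIC D)
end

/-! Both sides are defined by structural recursion on the derivation, so the identity is proved by
mutual induction on derivations, generalised from the single substitution `[D_v/x]` to an arbitrary
derivation substitution `σ` paired with a term substitution `s` that agrees with the CPS image of
`σ`. The induction goes through because every piece of syntax the translation introduces (the
sequencing sugar `apc`, the subtyping coercions, the administrative redexes for effectful `let`,
operation calls and handlers) commutes with term substitution, the de Bruijn shifts inside them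
being absorbed by lifting `s`. Lifting `σ` weakens the derivations it carries, so the same result is
needed first for derivation renamings, which are treated as substitutions by variables. -/

theorem liftS_comp_liftR (σ : ℕ → Val) (ξ : ℕ → ℕ) : liftS σ ∘ liftR ξ = liftS (σ ∘ ξ) := by
  funext n
  cases n <;> rfl

mutual
theorem substV_renameV (σ : ℕ → Val) (ξ : ℕ → ℕ) :
    ∀ v : Val, substV σ (renameV ξ v) = substV (σ ∘ ξ) v
  | .var _ | .unit | .tt | .ff => rfl
  | .lam c => by simp only [renameV, substV, substC_renameC, liftS_comp_liftR]
  | .fix v => by simp only [renameV, substV, substV_renameV, liftS_comp_liftR]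
  | .record f => by simp only [renameV, substV, substV_renameV]
theorem substC_renameC (σ : ℕ → Val) (ξ : ℕ → ℕ) :
    ∀ c : Comp, substC σ (renameC ξ c) = substC (σ ∘ ξ) c
  | .ret v | .op _ v | .proj v _ => by simp only [renameC, substC, substV_renameV]
  | .app v₁ v₂ => by simp only [renameC, substC, substV_renameV]
  | .ite v c₁ c₂ => by simp only [renameC, substC, substV_renameV, substC_renameC]
  | .letin c₁ c₂ => by simp only [renameC, substC, substC_renameC, liftS_comp_liftR]
  | .handle r ops c => by simp only [renameC, substC, substC_renameC, liftS_comp_liftR]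
end

theorem liftS_var_comp (ξ : ℕ → ℕ) : liftS (Val.var ∘ ξ) = Val.var ∘ liftR ξ := by
  funext n
  cases n <;> rfl

mutual
theorem renameV_eq_substV (ξ : ℕ → ℕ) : ∀ v : Val, renameV ξ v = substV (Val.var ∘ ξ) v
  | .var _ | .unit | .tt | .ff => rfl
  | .lam c => by simp only [renameV, substV, renameC_eq_substC, liftS_var_comp]
  | .fix v => by simp only [renameV, substV, renameV_eq_substV, liftS_var_comp]
  | .record f => by simp only [renameV, substV, renameV_eq_substV]
theorem renameC_eq_substC (ξ : ℕ → ℕ) : ∀ c : Comp, renameC ξ c = substC (Val.var ∘ ξ) c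
  | .ret v | .op _ v | .proj v _ => by simp only [renameC, substC, renameV_eq_substV]
  | .app v₁ v₂ => by simp only [renameC, substC, renameV_eq_substV]
  | .ite v c₁ c₂ => by simp only [renameC, substC, renameV_eq_substV, renameC_eq_substC]
  | .letin c₁ c₂ => by simp only [renameC, substC, renameC_eq_substC, liftS_var_comp]
  | .handle r ops c => by simp only [renameC, substC, renameC_eq_substC, liftS_var_comp]
end

theorem renameV_renameV (ζ ξ : ℕ → ℕ) (v : Val) :
    renameV ζ (renameV ξ v) = renameV (ζ ∘ ξ) v := by
  rw [renameV_eq_substV ζ, substV_renameV, renameV_eq_substV (ζ ∘ ξ)]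
  rfl

theorem liftS_renameV_comp (ξ : ℕ → ℕ) (σ : ℕ → Val) :
    liftS (renameV ξ ∘ σ) = renameV (liftR ξ) ∘ liftS σ := by
  funext n
  cases n with
  | zero => rfl
  | succ n => simp only [Function.comp, liftS, renameV_renameV]; rfl

mutual
theorem renameV_substV (ξ : ℕ → ℕ) (σ : ℕ → Val) :
    ∀ v : Val, renameV ξ (substV σ v) = substV (renameV ξ ∘ σ) v
  | .var _ | .unit | .tt | .ff => rfl
  | .lam c => by simp only [renameV, substV, renameC_substC, liftS_renameV_comp]
  | .fix v => by simp only [renameV, substV, renameV_substV, liftS_renameV_comp]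
  | .record f => by simp only [renameV, substV, renameV_substV]
theorem renameC_substC (ξ : ℕ → ℕ) (σ : ℕ → Val) :
    ∀ c : Comp, renameC ξ (substC σ c) = substC (renameV ξ ∘ σ) c
  | .ret v | .op _ v | .proj v _ => by simp only [renameC, substC, renameV_substV]
  | .app v₁ v₂ => by simp only [renameC, substC, renameV_substV]
  | .ite v c₁ c₂ => by simp only [renameC, substC, renameV_substV, renameC_substC]
  | .letin c₁ c₂ => by simp only [renameC, substC, renameC_substC, liftS_renameV_comp]
  | .handle r ops c => by simp only [renameC, substC, renameC_substC, liftS_renameV_comp]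
end

theorem substC_renameC_comm {σ σ' : ℕ → Val} {ξ ξ' : ℕ → ℕ} (h : σ' ∘ ξ = renameV ξ' ∘ σ)
    (c : Comp) : substC σ' (renameC ξ c) = renameC ξ' (substC σ c) := by
  rw [substC_renameC, renameC_substC, h]

theorem substV_renameV_comm {σ σ' : ℕ → Val} {ξ ξ' : ℕ → ℕ} (h : σ' ∘ ξ = renameV ξ' ∘ σ)
    (v : Val) : substV σ' (renameV ξ v) = renameV ξ' (substV σ v) := by
  rw [substV_renameV, renameV_substV, h]

theorem liftS_comp_succ (σ : ℕ → Val) : liftS σ ∘ Nat.succ = renameV Nat.succ ∘ σ := rfl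

theorem liftS_liftS_comp_add_two (σ : ℕ → Val) :
    liftS (liftS σ) ∘ (· + 2) = renameV (· + 2) ∘ σ := by
  funext n
  exact renameV_renameV _ _ _

theorem liftS_liftS_liftS_comp_liftR_add_two (σ : ℕ → Val) :
    liftS (liftS (liftS σ)) ∘ liftR (· + 2) = renameV (liftR (· + 2)) ∘ liftS σ := by
  rw [liftS_comp_liftR, liftS_liftS_comp_add_two, liftS_renameV_comp]

theorem substC_apc (σ : ℕ → Val) (a b : Comp) :
    substC σ (apc a b) = apc (substC σ a) (substC σ b) := by
  simp only [apc, substC, substV, substC_renameC_comm (liftS_comp_succ σ)]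
  rfl

mutual
theorem substV_coerceV (σ : ℕ → Val) :
    ∀ {τ τ' : VTy} (d : SubVD τ τ') (v : Val), substV σ (coerceV d v) = coerceV d (substV σ v)
  | _, _, .unit, _ | _, _, .bool, _ => rfl
  | _, _, .arrow d₂₁ d₁₂, f => by
      simp only [coerceV, substV, substC, substC_coerceC, substV_coerceV,
        substV_renameV_comm (liftS_comp_succ σ)]
      rfl
theorem substC_coerceC (σ : ℕ → Val) :
    ∀ {ρ ρ' : CTy} (d : SubCD ρ ρ') (c : Comp), substC σ (coerceC d c) = coerceC d (substC σ c)
  | _, _, .pure d, c => by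
      simp only [coerceC, substC, substV, substV_coerceV]
      rfl
  | _, _, .ipure dT d₂₁ d₁₂, c => by
      simp only [coerceC, substC, substV, substC_apc, substC_coerceC, substV_coerceV,
        substC_renameC_comm (liftS_liftS_comp_add_two σ)]
      rfl
  | _, _, .embed dT dR, c => by
      simp only [coerceC, substC, substV, substC_apc, substC_coerceC, substV_coerceV,
        substC_renameC_comm (liftS_liftS_comp_add_two σ)]
      rfl
end

def cpsLet (c₁ c₂ : Comp) : Comp :=
  .ret (.lam (.ret (.lam (apc (apc (renameC (fun n => n + 2) c₁) (.ret (.var 1)))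
    (.ret (.lam (apc (apc (renameC (liftR (fun n => n + 2)) c₂) (.ret (.var 2)))
      (.ret (.var 1)))))))))

def cpsOp (o : ℕ) (v : Val) : Comp :=
  .ret (.lam (.ret (.lam (apc (apc (.proj (.var 1) o)
    (.ret (renameV (fun n => n + 2) v))) (.ret (.var 0))))))

def cpsHandle (ops : ℕ → Comp) (r c : Comp) : Comp :=
  apc (apc c (.ret (.record (fun o => .lam (.ret (.lam (ops o))))))) (.ret (.lam r))

theorem substC_cpsLet (σ : ℕ → Val) (c₁ c₂ : Comp) :
    substC σ (cpsLet c₁ c₂) = cpsLet (substC σ c₁) (substC (liftS σ) c₂) := by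
  simp only [cpsLet, substC, substV, substC_apc,
    substC_renameC_comm (liftS_liftS_comp_add_two σ),
    substC_renameC_comm (liftS_liftS_liftS_comp_liftR_add_two σ)]
  rfl

theorem substC_cpsOp (σ : ℕ → Val) (o : ℕ) (v : Val) :
    substC σ (cpsOp o v) = cpsOp o (substV σ v) := by
  simp only [cpsOp, substC, substV, substC_apc, substV_renameV_comm (liftS_liftS_comp_add_two σ)]
  rfl

theorem substC_cpsHandle (σ : ℕ → Val) (ops : ℕ → Comp) (r c : Comp) :
    substC σ (cpsHandle ops r c)
      = cpsHandle (fun o => substC (liftS (liftS σ)) (ops o)) (substC (liftS σ) r) (substC σ c) := by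
  simp only [cpsHandle, substC, substV, substC_apc]

section Cps

variable {S : Sig}

theorem cpsIC_letIp {Γ : List VTy} {τ₁ τ₂ : VTy} {ρ₁ ρ₁' ρ₂ : CTy}
    (D₁ : IC S Γ (.eff τ₁ ρ₁ ρ₁')) (D₂ : IC S (τ₁ :: Γ) (.eff τ₂ ρ₂ ρ₁)) :
    cpsIC (.letIp D₁ D₂) = cpsLet (cpsIC D₁) (cpsIC D₂) := rfl

theorem cpsIC_op {Γ : List VTy} (o : ℕ) (D : IV S Γ (S.arg o)) :
    cpsIC (.op o D) = cpsOp o (cpsIV D) := rfl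

theorem cpsIC_handle {Γ : List VTy} {τ : VTy} {ρ ρ' : CTy}
    (Dops : ∀ o, IC S (.arrow (S.res o) (S.ans1 o) :: S.arg o :: Γ) (S.ans2 o))
    (Dret : IC S (τ :: Γ) ρ) (Dc : IC S Γ (.eff τ ρ ρ')) :
    cpsIC (.handle Dops Dret Dc) = cpsHandle (fun o => cpsIC (Dops o)) (cpsIC Dret) (cpsIC Dc) :=
  rfl

mutual
theorem cpsIV_renIV : ∀ {Γ Γ' : List VTy} {τ : VTy} (ξ : ℕ → ℕ) (h : Extr ξ Γ Γ')
    (D : IV S Γ τ), cpsIV (renIV ξ h D) = substV (Val.var ∘ ξ) (cpsIV D)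
  | _, _, _, _, _, .var _ _ | _, _, _, _, _, .unit | _, _, _, _, _, .tt
  | _, _, _, _, _, .ff => rfl
  | _, _, _, ξ, h, .lam D => by
      simp only [renIV, cpsIV, substV, cpsIC_renIC, liftS_var_comp]
  | _, _, _, ξ, h, .fix D => by
      simp only [renIV, cpsIV, substV, cpsIV_renIV, liftS_var_comp]
  | _, _, _, ξ, h, .vsub D d => by
      simp only [renIV, cpsIV, substV_coerceV, cpsIV_renIV]
theorem cpsIC_renIC : ∀ {Γ Γ' : List VTy} {ρ : CTy} (ξ : ℕ → ℕ) (h : Extr ξ Γ Γ')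
    (D : IC S Γ ρ), cpsIC (renIC ξ h D) = substC (Val.var ∘ ξ) (cpsIC D)
  | _, _, _, ξ, h, .ret D => by simp only [renIC, cpsIC, substC, cpsIV_renIV]
  | _, _, _, ξ, h, .app D₁ D₂ => by simp only [renIC, cpsIC, substC, cpsIV_renIV]
  | _, _, _, ξ, h, .ite Dv D₁ D₂ => by
      simp only [renIC, cpsIC, substC, cpsIV_renIV, cpsIC_renIC]
  | _, _, _, ξ, h, .letP D₁ D₂ => by
      simp only [renIC, cpsIC, substC, cpsIC_renIC, liftS_var_comp]
  | _, _, _, ξ, h, .letIp D₁ D₂ => by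
      simp only [renIC, cpsIC_letIp, substC_cpsLet, cpsIC_renIC, liftS_var_comp]
  | _, _, _, ξ, h, .op o D => by
      simp only [renIC, cpsIC_op, substC_cpsOp, cpsIV_renIV]
  | _, _, _, ξ, h, .handle Dops Dret Dc => by
      simp only [renIC, cpsIC_handle, substC_cpsHandle, cpsIC_renIC, liftS_var_comp]
  | _, _, _, ξ, h, .csub D d => by
      simp only [renIC, cpsIC, substC_coerceC, cpsIC_renIC]
end

/-- A derivation substitution has values only at the variables of `Γ`, so its CPS image is
any term substitution that agrees with it there. -/
def ISub.CpsAgrees {Γ Γ' : List VTy} (σ : ISub S Γ Γ') (s : ℕ → Val) : Prop :=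
  ∀ n τ (h : Γ[n]? = some τ), cpsIV (σ n τ h) = s n

theorem ISub.CpsAgrees.lift {Γ Γ' : List VTy} {σ : ISub S Γ Γ'} {s : ℕ → Val}
    (hs : σ.CpsAgrees s) (τ : VTy) : (σ.lift τ).CpsAgrees (liftS s)
  | 0, _, _ => rfl
  | n + 1, τ', _ => (cpsIV_renIV Nat.succ _ (σ n τ' _)).trans <| by
      rw [hs, ← renameV_eq_substV]
      rfl

mutual
theorem cpsIV_substIV : ∀ {Γ Γ' : List VTy} {τ : VTy} {σ : ISub S Γ Γ'} {s : ℕ → Val},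
    σ.CpsAgrees s → ∀ D : IV S Γ τ, cpsIV (substIV σ D) = substV s (cpsIV D)
  | _, _, _, _, _, hs, .var n h => hs n _ h
  | _, _, _, _, _, _, .unit | _, _, _, _, _, _, .tt | _, _, _, _, _, _, .ff => rfl
  | _, _, _, _, _, hs, .lam D => by
      simp only [substIV, cpsIV, substV, cpsIC_substIC (hs.lift _)]
  | _, _, _, _, _, hs, .fix D => by
      simp only [substIV, cpsIV, substV, cpsIV_substIV (hs.lift _)]
  | _, _, _, _, _, hs, .vsub D d => by
      simp only [substIV, cpsIV, substV_coerceV, cpsIV_substIV hs]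
theorem cpsIC_substIC : ∀ {Γ Γ' : List VTy} {ρ : CTy} {σ : ISub S Γ Γ'} {s : ℕ → Val},
    σ.CpsAgrees s → ∀ D : IC S Γ ρ, cpsIC (substIC σ D) = substC s (cpsIC D)
  | _, _, _, _, _, hs, .ret D => by simp only [substIC, cpsIC, substC, cpsIV_substIV hs]
  | _, _, _, _, _, hs, .app D₁ D₂ => by simp only [substIC, cpsIC, substC, cpsIV_substIV hs]
  | _, _, _, _, _, hs, .ite Dv D₁ D₂ => by
      simp only [substIC, cpsIC, substC, cpsIV_substIV hs, cpsIC_substIC hs]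
  | _, _, _, _, _, hs, .letP D₁ D₂ => by
      simp only [substIC, cpsIC, substC, cpsIC_substIC hs, cpsIC_substIC (hs.lift _)]
  | _, _, _, _, _, hs, .letIp D₁ D₂ => by
      simp only [substIC, cpsIC_letIp, substC_cpsLet, cpsIC_substIC hs,
        cpsIC_substIC (hs.lift _)]
  | _, _, _, _, _, hs, .op o D => by
      simp only [substIC, cpsIC_op, substC_cpsOp, cpsIV_substIV hs]
  | _, _, _, _, _, hs, .handle Dops Dret Dc => by
      simp only [substIC, cpsIC_handle, substC_cpsHandle, cpsIC_substIC hs,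
        cpsIC_substIC (hs.lift _), cpsIC_substIC ((hs.lift _).lift _)]
  | _, _, _, _, _, hs, .csub D d => by
      simp only [substIC, cpsIC, substC_coerceC, cpsIC_substIC hs]
end

theorem ISub.cpsAgrees_sub1I {Γ : List VTy} {τ : VTy} (Dv : IV S Γ τ) :
    (sub1I Dv).CpsAgrees (sub1 (cpsIV Dv))
  | 0, _, h => by
      obtain rfl : τ = _ := by simpa using h
      rfl
  | _ + 1, _, _ => rfl

end Cps

/-- Substitution commutes with the typing-derivation-directed CPS transformation:
    `⟦D_c[D_v/x]⟧ = ⟦D_c⟧[⟦D_v⟧/x]`. -/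
theorem cps_subst_commute (S : Sig) (Γ : List VTy) (τ : VTy) (ρ : CTy)
    (Dc : IC S (τ :: Γ) ρ) (Dv : IV S Γ τ) :
    cpsIC (substI1 Dc Dv) = subst1C (cpsIC Dc) (cpsIV Dv) :=
  cpsIC_substIC (ISub.cpsAgrees_sub1I Dv) Dc

end LEH
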